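/- Let C ⊆ F_q^n × F_q^n be an additive (F_p-linear) code self-orthogonal with respect to the symplectic form, and let c ∈ P(C) be a codeword of the puncture code with support of size r. Then the code C' obtained by replacing each pair (a_i|b_i) by (c_i a_i | b_i) and restricting to the support of c is again self-orthogonal with respect to the symplectic form on F_q^r × F_q^r. -/

import Mathlib

/-! Since the trace is `F_p`-linear, scaling `a_i` by `c_i` scales the `i`-th term of the
symplectic form by `c_i`; coordinates outside the support of `c` contribute nothing, so the
form of the new code is `-Σ_i c_i tr(a_i b_i' - a_i' b_i)`, which vanishes because `c ∈ P(C)`. -/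

theorem Fintype.sum_subtype_ne_zero_mul {ι R : Type*} [Fintype ι] [NonUnitalNonAssocSemiring R]
    (c f : ι → R) [Fintype {i // c i ≠ 0}] :
    ∑ i : {i // c i ≠ 0}, c i * f i = ∑ i, c i * f i := by
  classical
  rw [← Finset.sum_subtype {i | c i ≠ 0} (by simp) fun i ↦ c i * f i, Finset.sum_filter_of_ne]
  exact fun i _ hi hc ↦ hi (by rw [hc, zero_mul])

theorem Algebra.trace_smul_mul_sub_smul_mul {R S : Type*} [CommRing R] [CommRing S] [Algebra R S]
    (c : R) (a b a' b' : S) :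
    trace R S (c • a' * b - c • a * b') = -(c * trace R S (a * b' - a' * b)) := by
  rw [smul_mul_assoc, smul_mul_assoc, ← smul_sub, map_smul, smul_eq_mul, ← neg_sub, map_neg,
    mul_neg]

theorem puncture_code_self_orthogonal_general (p : ℕ) (K : Type) [Field K]
    [Algebra (ZMod p) K] (n : ℕ) [DecidableEq (ZMod p)]
    (C : Submodule (ZMod p) ((Fin n → K) × (Fin n → K)))
    (c : Fin n → ZMod p)
    (hc : ∀ v ∈ C, ∀ w ∈ C,
      ∑ i, c i * Algebra.trace (ZMod p) K (v.1 i * w.2 i - w.1 i * v.2 i) = 0) :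
    ∀ v ∈ C, ∀ w ∈ C,
      Algebra.trace (ZMod p) K (∑ i : { i // c i ≠ 0 },
        ((c i.1 • w.1 i.1) * v.2 i.1 - (c i.1 • v.1 i.1) * w.2 i.1)) = 0 := by
  intro v hv w hw
  simp only [map_sum, Algebra.trace_smul_mul_sub_smul_mul]
  rw [Finset.sum_neg_distrib, neg_eq_zero]
  exact (Fintype.sum_subtype_ne_zero_mul c _).trans (hc v hv w hw)

/-- let `C ⊆ F_q^n × F_q^n` be an additive (`F_p`-linear) code that
is self-orthogonal with respect to the symplectic form
`(a|b)*(a'|b') = tr(Σ_i a_i' b_i − a_i b_i')`, and let `c` be a codeword of the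
puncture code `P(C)` with support of size `r`.  Then the code obtained by
replacing each pair `(a_i|b_i)` by `(c_i a_i | b_i)` and restricting to the
support of `c` is again self-orthogonal with respect to the symplectic form on
`F_q^r × F_q^r`. -/
theorem puncture_code_self_orthogonal (p : ℕ) [Fact p.Prime] (K : Type) [Field K]
    [Fintype K] [Algebra (ZMod p) K] (n r : ℕ) [DecidableEq (ZMod p)]
    (C : Submodule (ZMod p) ((Fin n → K) × (Fin n → K)))
    (hso : ∀ v ∈ C, ∀ w ∈ C,
      Algebra.trace (ZMod p) K (∑ i, (w.1 i * v.2 i - v.1 i * w.2 i)) = 0)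
    (c : Fin n → ZMod p)
    (hc : ∀ v ∈ C, ∀ w ∈ C,
      ∑ i, c i * Algebra.trace (ZMod p) K (v.1 i * w.2 i - w.1 i * v.2 i) = 0)
    (hr : Fintype.card { i // c i ≠ 0 } = r) :
    ∀ v ∈ C, ∀ w ∈ C,
      Algebra.trace (ZMod p) K (∑ i : { i // c i ≠ 0 },
        ((c i.1 • w.1 i.1) * v.2 i.1 - (c i.1 • v.1 i.1) * w.2 i.1)) = 0 :=
  puncture_code_self_orthogonal_general p K n C c hc
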